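/- Let k be even and let G be a k-uniform hyperchain on n nodes (hyperedges e_j = {j, j+1, …, j+k−1} for j = 1,…,n−k+1) with adjacency tensor A. If only m = k−2 nodes receive inputs (i.e., B consists of k−2 distinct scaled standard basis vectors), then the controllability subspace 𝒞(A,B) has dimension k−2 < n; hence G is not controllable with k−2 control nodes. -/

import Mathlib

noncomputable section
open Classical

/-- Prepend `j` to the index tuple `js`. -/
def consIdx {n k : ℕ} (j : Fin n) (js : Fin (k - 1) → Fin n) : Fin k → Fin n :=
  fun t => if h : (t : ℕ) = 0 then j
    else js ⟨(t : ℕ) - 1, by have := t.isLt; omega⟩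

/-- Adjacency tensor of a `k`-uniform hypergraph with hyperedge set `E`. -/
def adjT (n k : ℕ) (E : Finset (Finset (Fin n))) : (Fin k → Fin n) → ℝ :=
  fun j => if Function.Injective j ∧ Finset.image j Finset.univ ∈ E
    then ((Nat.factorial (k - 1) : ℝ))⁻¹ else 0

/-- Contraction of a `k`-th order tensor along `k−1` modes with vectors `v`. -/
def tcontract {n k : ℕ} (A : (Fin k → Fin n) → ℝ) (v : Fin (k - 1) → (Fin n → ℝ)) :
    Fin n → ℝ :=
  fun j => ∑ js : Fin (k - 1) → Fin n, A (consIdx j js) * ∏ i, v i (js i)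

/-- The controllability subspace `𝒞(A,B)`: the smallest subspace of `ℝⁿ` containing the
set `Bc` of input columns and closed under the contraction map `v₁,…,v_{k−1} ↦ A v₁ ⋯ v_{k−1}`. -/
def ctrlSpace {n k : ℕ} (A : (Fin k → Fin n) → ℝ) (Bc : Set (Fin n → ℝ)) :
    Submodule ℝ (Fin n → ℝ) :=
  sInf {W : Submodule ℝ (Fin n → ℝ) | Bc ⊆ ↑W ∧
    ∀ v : Fin (k - 1) → (Fin n → ℝ), (∀ i, v i ∈ W) → tcontract A v ∈ W}

/-- The hyperedge `{l, l+1, …, l+k−1}` of a `k`-uniform hyperchain. -/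
def chainEdge (n k l : ℕ) : Finset (Fin n) :=
  Finset.univ.filter (fun i => l ≤ (i : ℕ) ∧ (i : ℕ) < l + k)

/-- The hyperedge set of the `k`-uniform hyperchain on `n` nodes. -/
def chainE (n k : ℕ) : Finset (Finset (Fin n)) :=
  (Finset.range (n - k + 1)).image (chainEdge n k)

/-- Adjacency tensor of the complete `k`-uniform hypergraph on `n` nodes. -/
def completeT (n k : ℕ) : (Fin k → Fin n) → ℝ :=
  fun j => if Function.Injective j then ((Nat.factorial (k - 1) : ℝ))⁻¹ else 0

/-!
Every entry of the adjacency tensor with a repeated index vanishes. The span of the `k - 2`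
input columns consists of vectors supported on the `k - 2` control nodes, so contracting `k - 1`
of them only meets index tuples with a repetition, and gives `0`. Hence that span is already
closed under contraction, and it is the controllability subspace.
-/

open Function

def inputColumns {ι K : Type*} [DecidableEq ι] [Semiring K] (S : Finset ι) (c : ι → K) :
    Set (ι → K) :=
  {x | ∃ s ∈ S, x = c s • Pi.single s 1}

section InputColumns

variable {ι K : Type*} [DecidableEq ι] (S : Finset ι) (c : ι → K)

lemma apply_eq_zero_of_mem_span_inputColumns [Semiring K] {x : ι → K}
    (hx : x ∈ Submodule.span K (inputColumns S c)) {i : ι} (hi : i ∉ S) : x i = 0 := by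
  suffices inputColumns S c ⊆ LinearMap.ker (LinearMap.proj i : (ι → K) →ₗ[K] K) from
    Submodule.span_le.2 this hx
  rintro _ ⟨s, hs, rfl⟩
  have : i ≠ s := fun h => hi (h ▸ hs)
  simp [this]

lemma finrank_span_inputColumns [DivisionRing K] [Fintype ι] (hc : ∀ s ∈ S, c s ≠ 0) :
    Module.finrank K (Submodule.span K (inputColumns S c)) = S.card := by
  have hli : LinearIndependent K fun s : S => (Pi.single (s : ι) 1 : ι → K) :=
    (Pi.linearIndependent_single_one ι K).comp _ Subtype.val_injective
  have hrange : inputColumns S c = Set.range fun s : S => c s • (Pi.single (s : ι) 1 : ι → K) := by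
    ext x
    simp [inputColumns, eq_comm]
  rw [hrange, ← Fintype.card_coe S]
  exact finrank_span_eq_card (hli.units_smul fun s => Units.mk0 (c s) (hc s s.2))

end InputColumns

section Tensor

variable {n k : ℕ}

lemma consIdx_succ (j : Fin n) (js : Fin (k - 1) → Fin n) (i : Fin (k - 1)) :
    consIdx j js ⟨i + 1, by omega⟩ = js i := by
  simp [consIdx]

lemma Function.Injective.of_consIdx {j : Fin n} {js : Fin (k - 1) → Fin n}
    (h : Injective (consIdx j js)) : Injective js := by
  intro a b hab
  have := @h ⟨a + 1, by omega⟩ ⟨b + 1, by omega⟩ (by rw [consIdx_succ, consIdx_succ, hab])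
  simp only [Fin.mk.injEq, add_left_inj] at this
  exact Fin.ext this

lemma adjT_eq_zero_of_not_injective (E : Finset (Finset (Fin n))) (j : Fin k → Fin n)
    (hj : ¬ Injective j) : adjT n k E j = 0 :=
  if_neg fun h => hj h.1

lemma tcontract_eq_zero_of_card_lt {A : (Fin k → Fin n) → ℝ}
    (hA : ∀ j, ¬ Injective j → A j = 0) {S : Finset (Fin n)} (hS : S.card < k - 1)
    {v : Fin (k - 1) → Fin n → ℝ} (hv : ∀ i x, x ∉ S → v i x = 0) : tcontract A v = 0 := by
  funext j
  refine Finset.sum_eq_zero fun js _ => ?_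
  by_cases hall : ∀ i, js i ∈ S
  · have hjs : ¬ Injective js := fun hinj => by
      have := Finset.card_le_card_of_injOn (s := Finset.univ) js (fun i _ => hall i) hinj.injOn
      simp only [Finset.card_univ, Fintype.card_fin] at this
      omega
    rw [hA _ (fun h => hjs h.of_consIdx), zero_mul]
  · obtain ⟨i, hi⟩ := not_forall.1 hall
    rw [Finset.prod_eq_zero (Finset.mem_univ i) (hv i _ hi), mul_zero]

lemma ctrlSpace_eq_span {A : (Fin k → Fin n) → ℝ} {Bc : Set (Fin n → ℝ)}
    (h : ∀ v : Fin (k - 1) → Fin n → ℝ, (∀ i, v i ∈ Submodule.span ℝ Bc) →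
      tcontract A v ∈ Submodule.span ℝ Bc) :
    ctrlSpace A Bc = Submodule.span ℝ Bc :=
  le_antisymm (sInf_le ⟨Submodule.subset_span, h⟩)
    (Submodule.span_le.2 fun _ hx => Submodule.mem_sInf.2 fun _ hW => hW.1 hx)

end Tensor

theorem stmt8_general {n k : ℕ} (hk : 2 ≤ k) (hkn : k ≤ n)
    (S : Finset (Fin n)) (hcard : S.card = k - 2)
    (c : Fin n → ℝ) (hc : ∀ s ∈ S, c s ≠ 0) :
    Module.finrank ℝ
        (ctrlSpace (adjT n k (chainE n k)) {x | ∃ s ∈ S, x = c s • (Pi.single s 1 : Fin n → ℝ)})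
        = k - 2
      ∧ ctrlSpace (adjT n k (chainE n k)) {x | ∃ s ∈ S, x = c s • (Pi.single s 1 : Fin n → ℝ)} ≠ ⊤ := by
  have hspan : ctrlSpace (adjT n k (chainE n k)) (inputColumns S c)
      = Submodule.span ℝ (inputColumns S c) := by
    refine ctrlSpace_eq_span fun v hv => ?_
    rw [tcontract_eq_zero_of_card_lt (adjT_eq_zero_of_not_injective _) (by omega)
      fun i x hx => apply_eq_zero_of_mem_span_inputColumns S c (hv i) hx]
    exact Submodule.zero_mem _
  have hrank := finrank_span_inputColumns S c hc
  refine ⟨by rw [← inputColumns, hspan, hrank, hcard], fun htop => ?_⟩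
  rw [← inputColumns, hspan] at htop
  rw [htop, finrank_top, Module.finrank_fin_fun] at hrank
  omega

/-- For even `k`, a `k`-uniform hyperchain on `n` nodes is not controllable with
`k−2` control nodes: the controllability subspace generated by `k−2` scaled standard
basis vectors has dimension `k−2 < n`. -/
theorem stmt8 {n k : ℕ} (hkeven : Even k) (hk : 2 ≤ k) (hkn : k ≤ n)
    (S : Finset (Fin n)) (hcard : S.card = k - 2)
    (c : Fin n → ℝ) (hc : ∀ s ∈ S, c s ≠ 0) :
    Module.finrank ℝ
        (ctrlSpace (adjT n k (chainE n k)) {x | ∃ s ∈ S, x = c s • (Pi.single s 1 : Fin n → ℝ)})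
        = k - 2
      ∧ ctrlSpace (adjT n k (chainE n k)) {x | ∃ s ∈ S, x = c s • (Pi.single s 1 : Fin n → ℝ)} ≠ ⊤ :=
  stmt8_general hk hkn S hcard c hc
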